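/- arXiv:1407.5204 — 2 statements merged into one kernel-verified Lean document; each statement's English description precedes it below -/
import Mathlib

section
/- Let L = L(f,g) be a simple lune with domain [a,b] whose support is the open interval (c,d). Then the essential part of L equals {(x,y) ∈ L : c ≤ x ≤ d}; in particular, ess L is itself a lune (namely the lune determined by the restrictions of f and g to [c,d]) and it is simple. -/
open Set Filter Topology

/-- The lune `L(f,g)` with domain `[a,b]`: the plane region
`{(x,y) : a ≤ x ≤ b, f(x) ≤ y ≤ g(x)}`. -/
def lune (a b : ℝ) (f g : ℝ → ℝ) : Set (ℝ × ℝ) :=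
  {p : ℝ × ℝ | p.1 ∈ Icc a b ∧ f p.1 ≤ p.2 ∧ p.2 ≤ g p.1}

/-- The support of the lune `L(f,g)`: `S_L = {x ∈ [a,b] : f(x) < g(x)}`. -/
def luneSupport (a b : ℝ) (f g : ℝ → ℝ) : Set ℝ :=
  {x ∈ Icc a b | f x < g x}

/-- The data `(a,b,f,g)` determines a lune: `a < b`, the functions `f,g` are `C^∞` on
`[a,b]`, `f ≤ g` on `[a,b]`, and all derivatives of `f` and `g` coincide at `a` and `b`. -/
def IsLune (a b : ℝ) (f g : ℝ → ℝ) : Prop :=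
  a < b ∧ ContDiffOn ℝ (⊤ : ℕ∞) f (Icc a b) ∧ ContDiffOn ℝ (⊤ : ℕ∞) g (Icc a b) ∧
    (∀ x ∈ Icc a b, f x ≤ g x) ∧
    (∀ n : ℕ, iteratedDerivWithin n f (Icc a b) a = iteratedDerivWithin n g (Icc a b) a) ∧
    (∀ n : ℕ, iteratedDerivWithin n f (Icc a b) b = iteratedDerivWithin n g (Icc a b) b)

/-- A lune is simple if its support is a nonempty open interval. -/
def IsSimpleLune (a b : ℝ) (f g : ℝ → ℝ) : Prop :=
  IsLune a b f g ∧ ∃ c d : ℝ, c < d ∧ luneSupport a b f g = Ioo c d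

/-- The essential part of a lune: the closure of its interior. -/
def essLune (a b : ℝ) (f g : ℝ → ℝ) : Set (ℝ × ℝ) :=
  closure (interior (lune a b f g))

/-- The `C^k` norm of a `C^∞` function on `[a,b]`:
`‖F‖_k = max_{0 ≤ i ≤ k} sup_{x ∈ [a,b]} |F^{(i)}(x)|`. -/
noncomputable def ckNorm (a b : ℝ) (k : ℕ) (F : ℝ → ℝ) : ℝ :=
  sSup {y : ℝ | ∃ i ≤ k, ∃ x ∈ Icc a b, y = |iteratedDerivWithin i F (Icc a b) x|}

/-- The `C^k` norm of the lune `L(f,g)`: `‖L‖_k = ‖g − f‖_k`. -/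
noncomputable def luneNorm (a b : ℝ) (k : ℕ) (f g : ℝ → ℝ) : ℝ :=
  ckNorm a b k (fun x => g x - f x)

/-- Auxiliary: iterated derivatives within a closed subinterval agree with those within the
ambient closed interval, for smooth functions. -/
lemma lune_aux_subset_jets {a b c d : ℝ} (hab : a < b) (hcd : c < d)
    (hsub : Icc c d ⊆ Icc a b) {h : ℝ → ℝ} (hh : ContDiffOn ℝ (⊤ : ℕ∞) h (Icc a b))
    {x : ℝ} (hx : x ∈ Icc c d) (n : ℕ) :
    iteratedDerivWithin n h (Icc c d) x = iteratedDerivWithin n h (Icc a b) x := by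
  have H := ((hh.ftaylorSeriesWithin (uniqueDiffOn_Icc hab)).mono
    hsub).eq_iteratedFDerivWithin_of_uniqueDiffOn (m := n) (by exact_mod_cast le_top) (uniqueDiffOn_Icc hcd) hx
  have H2 : iteratedFDerivWithin ℝ n h (Icc c d) x = iteratedFDerivWithin ℝ n h (Icc a b) x :=
    H.symm
  rw [iteratedDerivWithin_eq_iteratedFDerivWithin, iteratedDerivWithin_eq_iteratedFDerivWithin, H2]

/-- Auxiliary: iterated derivatives of two smooth functions agree at a limit point of a set
where they agree. -/
lemma lune_aux_jets_limit {a b : ℝ} (hab : a < b) {f g : ℝ → ℝ}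
    (hf : ContDiffOn ℝ (⊤ : ℕ∞) f (Icc a b)) (hg : ContDiffOn ℝ (⊤ : ℕ∞) g (Icc a b))
    {T : Set ℝ} (hT : T ⊆ Icc a b) {x₀ : ℝ} (hx₀ : x₀ ∈ Icc a b)
    (hne : (𝓝[T] x₀).NeBot) (n : ℕ)
    (heq : ∀ x ∈ T, iteratedDerivWithin n f (Icc a b) x = iteratedDerivWithin n g (Icc a b) x) :
    iteratedDerivWithin n f (Icc a b) x₀ = iteratedDerivWithin n g (Icc a b) x₀ := by
  haveI := hne
  have h1 : ContinuousWithinAt (iteratedDerivWithin n f (Icc a b)) T x₀ :=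
    ((hf.continuousOn_iteratedDerivWithin (by exact_mod_cast le_top) (uniqueDiffOn_Icc hab)) x₀ hx₀).mono hT
  have h2 : ContinuousWithinAt (iteratedDerivWithin n g (Icc a b)) T x₀ :=
    ((hg.continuousOn_iteratedDerivWithin (by exact_mod_cast le_top) (uniqueDiffOn_Icc hab)) x₀ hx₀).mono hT
  have hEq : iteratedDerivWithin n f (Icc a b) =ᶠ[𝓝[T] x₀] iteratedDerivWithin n g (Icc a b) :=
    eventually_nhdsWithin_of_forall heq
  exact tendsto_nhds_unique h1.tendsto (h2.tendsto.congr' hEq.symm)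

/-- Auxiliary: iterated derivatives agree at points near which the functions agree. -/
lemma lune_aux_jets_local {f g : ℝ → ℝ} {s : Set ℝ} {x : ℝ}
    (hev : f =ᶠ[𝓝[s] x] g) (hx : f x = g x) (n : ℕ) :
    iteratedDerivWithin n f s x = iteratedDerivWithin n g s x := by
  rw [iteratedDerivWithin_eq_iteratedFDerivWithin, iteratedDerivWithin_eq_iteratedFDerivWithin,
    hev.iteratedFDerivWithin_eq hx n]

/-- Auxiliary: `1/(n+2) → 0`. -/
lemma lune_aux_tendsto_two : Tendsto (fun n : ℕ => (1:ℝ) / ((n : ℝ) + 2)) atTop (𝓝 0) := by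
  have h := (tendsto_one_div_add_atTop_nhds_zero_nat (𝕜 := ℝ)).comp (tendsto_add_atTop_nat 1)
  have heq : (fun n : ℕ => (1:ℝ) / ((n : ℝ) + 2)) =
      (fun n : ℕ => (1:ℝ) / ((n : ℝ) + 1)) ∘ (fun n => n + 1) := by
    funext n; simp only [Function.comp_apply]; push_cast; ring_nf
  rw [heq]; exact h

/-- Auxiliary: boundary points of the closed region lie in the closure of the open core. -/
lemma lune_aux_boundary {a b c d x₀ : ℝ} {f g : ℝ → ℝ}
    (hIoo : Ioo c d ⊆ Icc a b)
    (hfc : ContinuousWithinAt f (Icc a b) x₀) (hgc : ContinuousWithinAt g (Icc a b) x₀)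
    (hlt : ∀ x ∈ Ioo c d, f x < g x)
    (xseq : ℕ → ℝ) (hseq : ∀ n, xseq n ∈ Ioo c d)
    (hxtend : Tendsto xseq atTop (𝓝 x₀)) (hfgx : f x₀ = g x₀) {y : ℝ}
    (hy : y = f x₀) :
    ((x₀, y) : ℝ × ℝ) ∈ closure {p : ℝ × ℝ | p.1 ∈ Ioo c d ∧ f p.1 < p.2 ∧ p.2 < g p.1} := by
  have hxtend' : Tendsto xseq atTop (𝓝[Icc a b] x₀) :=
    tendsto_nhdsWithin_of_tendsto_nhds_of_eventually_within _ hxtend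
      (Eventually.of_forall fun n => hIoo (hseq n))
  have hft : Tendsto (fun n => f (xseq n)) atTop (𝓝 (f x₀)) := hfc.tendsto.comp hxtend'
  have hgt : Tendsto (fun n => g (xseq n)) atTop (𝓝 (g x₀)) := hgc.tendsto.comp hxtend'
  have hy2 : y = (f x₀ + g x₀) / 2 := by rw [hy]; rw [hfgx]; ring
  have hq : Tendsto (fun n => ((xseq n, (f (xseq n) + g (xseq n)) / 2) : ℝ × ℝ))
      atTop (𝓝 (x₀, y)) := by
    apply Tendsto.prodMk_nhds hxtend
    rw [hy2]
    exact (hft.add hgt).div_const 2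
  apply mem_closure_of_tendsto hq
  apply Eventually.of_forall
  intro n
  exact ⟨hseq n, by linarith [hlt _ (hseq n)], by linarith [hlt _ (hseq n)]⟩

/-- Let `L = L(f,g)` be a simple lune with domain `[a,b]` whose support is
the open interval `(c,d)`. Then the essential part of `L` equals
`{(x,y) ∈ L : c ≤ x ≤ d}`; in particular `ess L` is itself a lune (namely the lune
determined by the restrictions of `f` and `g` to `[c,d]`) and it is simple. -/
theorem essLune_of_simpleLune (a b c d : ℝ) (f g : ℝ → ℝ)
    (hL : IsLune a b f g) (hcd : c < d)
    (hsupp : luneSupport a b f g = Ioo c d) :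
    essLune a b f g = {p ∈ lune a b f g | c ≤ p.1 ∧ p.1 ≤ d} ∧
    essLune a b f g = lune c d f g ∧
    IsSimpleLune c d f g := by
  obtain ⟨hab, hf, hg, hfg, hA, hB⟩ := hL
  -- basic interval facts
  have hsub : Icc c d ⊆ Icc a b := by
    rw [← closure_Ioo hcd.ne, ← closure_Icc (a := a) (b := b)]
    apply closure_mono
    rw [← hsupp]; exact fun x hx => hx.1
  have hac : a ≤ c := (hsub ⟨le_rfl, hcd.le⟩).1
  have hdb : d ≤ b := (hsub ⟨hcd.le, le_rfl⟩).2
  have hcmem : c ∈ Icc a b := hsub ⟨le_rfl, hcd.le⟩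
  have hdmem : d ∈ Icc a b := hsub ⟨hcd.le, le_rfl⟩
  have hIoo : Ioo c d ⊆ Icc a b := fun x hx => hsub ⟨hx.1.le, hx.2.le⟩
  -- f = g off the support
  have heqoff : ∀ x ∈ Icc a b, x ∉ Ioo c d → f x = g x := by
    intro x hx hx'
    by_contra hne
    exact hx' (hsupp ▸ (⟨hx, lt_of_le_of_ne (hfg x hx) hne⟩ : x ∈ luneSupport a b f g))
  have hlt : ∀ x ∈ Ioo c d, f x < g x := by
    intro x hx
    have : x ∈ luneSupport a b f g := hsupp ▸ hx
    exact this.2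
  have hfc : f c = g c := heqoff c hcmem (fun h => lt_irrefl c h.1)
  have hfd : f d = g d := heqoff d hdmem (fun h => lt_irrefl d h.2)
  -- the open core U
  set U : Set (ℝ × ℝ) := {p : ℝ × ℝ | p.1 ∈ Ioo c d ∧ f p.1 < p.2 ∧ p.2 < g p.1} with hUdef
  have hIooab : Ioo c d ⊆ Ioo a b := fun x hx =>
    ⟨lt_of_le_of_lt hac hx.1, lt_of_lt_of_le hx.2 hdb⟩
  have hcontAt : ∀ x ∈ Ioo c d, ContinuousAt f x ∧ ContinuousAt g x := by
    intro x hx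
    have hnb : Icc a b ∈ 𝓝 x := by
      rw [← closure_Ioo hab.ne]
      exact mem_of_superset (isOpen_Ioo.mem_nhds (hIooab hx)) subset_closure
    exact ⟨hf.continuousOn.continuousAt hnb, hg.continuousOn.continuousAt hnb⟩
  have hUopen : IsOpen U := by
    rw [isOpen_iff_mem_nhds]
    rintro p ⟨hp1, hp2, hp3⟩
    obtain ⟨hfa, hga⟩ := hcontAt p.1 hp1
    have e1 : ∀ᶠ q : ℝ × ℝ in 𝓝 p, f q.1 < q.2 :=
      (hfa.comp continuousAt_fst).eventually_lt continuousAt_snd hp2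
    have e2 : ∀ᶠ q : ℝ × ℝ in 𝓝 p, q.2 < g q.1 :=
      ContinuousAt.eventually_lt continuousAt_snd (hga.comp continuousAt_fst) hp3
    have e3 : ∀ᶠ q : ℝ × ℝ in 𝓝 p, q.1 ∈ Ioo c d :=
      (isOpen_Ioo.preimage continuous_fst).mem_nhds hp1
    filter_upwards [e1, e2, e3] with q h1 h2 h3
    exact ⟨h3, h1, h2⟩
  have hUsub : U ⊆ lune a b f g := by
    rintro p ⟨h1, h2, h3⟩
    exact ⟨hIoo h1, h2.le, h3.le⟩
  -- interior of the lune is exactly U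
  have hint : interior (lune a b f g) = U := by
    apply Subset.antisymm
    · intro p hp
      have hpl : p ∈ lune a b f g := interior_subset hp
      obtain ⟨hp1, hp2, hp3⟩ := hpl
      obtain ⟨ε, hε, hball⟩ := Metric.mem_nhds_iff.1 (mem_interior_iff_mem_nhds.1 hp)
      have hup : ∀ t : ℝ, |t| < ε → (p.1, p.2 + t) ∈ lune a b f g := by
        intro t ht
        apply hball
        rw [Metric.mem_ball, Prod.dist_eq]
        simp only [dist_self, Real.dist_eq, add_sub_cancel_left]
        exact max_lt hε ht
      have habs : |ε / 2| < ε := by rw [abs_of_pos (by linarith)]; linarith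
      have hflt : f p.1 < g p.1 := by
        rcases lt_or_eq_of_le (hfg p.1 hp1) with h | h
        · exact h
        · exfalso
          have h5 := (hup (ε / 2) habs).2.2
          simp only at h5
          rw [← h] at h5
          linarith
      have hmemIoo : p.1 ∈ Ioo c d := hsupp ▸ (⟨hp1, hflt⟩ : p.1 ∈ luneSupport a b f g)
      have h2' : f p.1 < p.2 := by
        rcases lt_or_eq_of_le hp2 with h | h
        · exact h
        · exfalso
          have h5 := (hup (-(ε / 2)) (by rwa [abs_neg])).2.1
          simp only at h5
          linarith
      have h3' : p.2 < g p.1 := by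
        rcases lt_or_eq_of_le hp3 with h | h
        · exact h
        · exfalso
          have h5 := (hup (ε / 2) habs).2.2
          simp only at h5
          linarith
      exact ⟨hmemIoo, h2', h3'⟩
    · rw [← hUopen.subset_interior_iff] at hUsub
      exact hUsub
  -- the set lune c d f g is closed
  have hVclosed : IsClosed (lune c d f g) := by
    have hclamp : ∀ x : ℝ, max c (min d x) ∈ Icc c d :=
      fun x => ⟨le_max_left _ _, max_le hcd.le (min_le_left _ _)⟩
    have hclamp_id : ∀ x ∈ Icc c d, max c (min d x) = x := by
      intro x hx
      rw [min_eq_right hx.2, max_eq_right hx.1]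
    have hcont : Continuous fun x : ℝ => max c (min d x) :=
      continuous_const.max (continuous_const.min continuous_id)
    have hFc : Continuous fun x : ℝ => f (max c (min d x)) :=
      (hf.continuousOn.mono hsub).comp_continuous hcont fun x => hclamp x
    have hGc : Continuous fun x : ℝ => g (max c (min d x)) :=
      (hg.continuousOn.mono hsub).comp_continuous hcont fun x => hclamp x
    have hrepr : lune c d f g = {p : ℝ × ℝ | p.1 ∈ Icc c d} ∩
        ({p : ℝ × ℝ | f (max c (min d p.1)) ≤ p.2} ∩
          {p : ℝ × ℝ | p.2 ≤ g (max c (min d p.1))}) := by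
      ext p
      simp only [lune, mem_setOf_eq, mem_inter_iff]
      constructor
      · rintro ⟨h1, h2, h3⟩
        rw [hclamp_id p.1 h1]
        exact ⟨h1, h2, h3⟩
      · rintro ⟨h1, h2, h3⟩
        rw [hclamp_id p.1 h1] at h2 h3
        exact ⟨h1, h2, h3⟩
    rw [hrepr]
    exact (isClosed_Icc.preimage continuous_fst).inter
      ((isClosed_le (hFc.comp continuous_fst) continuous_snd).inter
        (isClosed_le continuous_snd (hGc.comp continuous_fst)))
  have hUV : U ⊆ lune c d f g := by
    rintro p ⟨h1, h2, h3⟩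
    exact ⟨⟨h1.1.le, h1.2.le⟩, h2.le, h3.le⟩
  -- closure U = lune c d f g
  have hclosure : closure U = lune c d f g := by
    apply Subset.antisymm (closure_minimal hUV hVclosed)
    rintro ⟨x₀, y⟩ ⟨hx₀, hy1, hy2⟩
    simp only at hx₀ hy1 hy2
    rcases lt_or_eq_of_le hx₀.1 with hcx | hcx
    · rcases lt_or_eq_of_le hx₀.2 with hxd | hxd
      · -- interior case : x₀ ∈ Ioo c d, approach vertically
        have hx₀' : x₀ ∈ Ioo c d := ⟨hcx, hxd⟩
        have hflt := hlt x₀ hx₀'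
        set m := (f x₀ + g x₀) / 2 with hm
        have hm1 : f x₀ < m := by rw [hm]; linarith
        have hm2 : m < g x₀ := by rw [hm]; linarith
        have hmemU : ∀ n : ℕ, ((x₀, y + (m - y) * (1 / ((n : ℝ) + 1))) : ℝ × ℝ) ∈ U := by
          intro n
          have ht0 : (0:ℝ) < 1 / ((n : ℝ) + 1) := by positivity
          have ht1 : (1:ℝ) / ((n : ℝ) + 1) ≤ 1 := by
            rw [div_le_one (by positivity)]
            exact le_add_of_nonneg_left (Nat.cast_nonneg n)
          refine ⟨hx₀', ?_, ?_⟩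
          · simp only
            nlinarith [mul_nonneg (sub_nonneg.2 hy1) (sub_nonneg.2 ht1),
              mul_pos ht0 (sub_pos.2 hm1)]
          · simp only
            nlinarith [mul_nonneg (sub_nonneg.2 hy2) (sub_nonneg.2 ht1),
              mul_pos ht0 (sub_pos.2 hm2)]
        have htend : Tendsto (fun n : ℕ => ((x₀, y + (m - y) * (1 / ((n : ℝ) + 1))) : ℝ × ℝ))
            atTop (𝓝 (x₀, y)) := by
          apply Tendsto.prodMk_nhds tendsto_const_nhds
          have h6 : Tendsto (fun n : ℕ => y + (m - y) * (1 / ((n : ℝ) + 1))) atTop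
              (𝓝 (y + (m - y) * 0)) :=
            tendsto_const_nhds.add
              (tendsto_const_nhds.mul tendsto_one_div_add_atTop_nhds_zero_nat)
          simpa using h6
        exact mem_closure_of_tendsto htend (Eventually.of_forall hmemU)
      · -- x₀ = d
        subst hxd
        have hyd : y = f x₀ := by
          rw [hfd] at hy1 ⊢
          exact le_antisymm hy2 hy1
        have hseq : ∀ n : ℕ, x₀ - (x₀ - c) * (1 / ((n : ℝ) + 2)) ∈ Ioo c x₀ := by
          intro n
          have ht0 : (0:ℝ) < 1 / ((n : ℝ) + 2) := by positivity
          have ht1 : (1:ℝ) / ((n : ℝ) + 2) < 1 := by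
            rw [div_lt_one (by positivity)]
            linarith [Nat.cast_nonneg (α := ℝ) n]
          constructor
          · nlinarith [mul_pos (sub_pos.2 hcd) ht0]
          · nlinarith [mul_pos (sub_pos.2 hcd) ht0]
        have hxtend : Tendsto (fun n : ℕ => x₀ - (x₀ - c) * (1 / ((n : ℝ) + 2))) atTop (𝓝 x₀) := by
          have h6 : Tendsto (fun n : ℕ => x₀ - (x₀ - c) * (1 / ((n : ℝ) + 2))) atTop
              (𝓝 (x₀ - (x₀ - c) * 0)) :=
            tendsto_const_nhds.sub (tendsto_const_nhds.mul lune_aux_tendsto_two)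
          simpa using h6
        exact lune_aux_boundary hIoo (hf.continuousOn x₀ hdmem)
          (hg.continuousOn x₀ hdmem) hlt _ hseq hxtend hfd hyd
    · -- x₀ = c
      have hcx' : x₀ = c := hcx.symm
      subst hcx'
      have hyc : y = f x₀ :=
        le_antisymm (by rw [hfc]; exact hy2) hy1
      have hseq : ∀ n : ℕ, x₀ + (d - x₀) * (1 / ((n : ℝ) + 2)) ∈ Ioo x₀ d := by
        intro n
        have ht0 : (0:ℝ) < 1 / ((n : ℝ) + 2) := by positivity
        have ht1 : (1:ℝ) / ((n : ℝ) + 2) < 1 := by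
          rw [div_lt_one (by positivity)]
          linarith [Nat.cast_nonneg (α := ℝ) n]
        constructor
        · nlinarith [mul_pos (sub_pos.2 hcd) ht0]
        · nlinarith [mul_pos (sub_pos.2 hcd) ht0]
      have hxtend : Tendsto (fun n : ℕ => x₀ + (d - x₀) * (1 / ((n : ℝ) + 2))) atTop (𝓝 x₀) := by
        have h6 : Tendsto (fun n : ℕ => x₀ + (d - x₀) * (1 / ((n : ℝ) + 2))) atTop
            (𝓝 (x₀ + (d - x₀) * 0)) :=
          tendsto_const_nhds.add (tendsto_const_nhds.mul lune_aux_tendsto_two)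
        simpa using h6
      exact lune_aux_boundary hIoo (hf.continuousOn x₀ hcmem)
        (hg.continuousOn x₀ hcmem) hlt _ hseq hxtend hfc hyc
  have hEss : essLune a b f g = lune c d f g := by
    rw [essLune, hint, hclosure]
  -- the truncated lune equals lune c d f g
  have hset : {p ∈ lune a b f g | c ≤ p.1 ∧ p.1 ≤ d} = lune c d f g := by
    ext p
    constructor
    · rintro ⟨⟨_, h2, h3⟩, h4, h5⟩
      exact ⟨⟨h4, h5⟩, h2, h3⟩
    · rintro ⟨h1, h2, h3⟩
      exact ⟨⟨hsub h1, h2, h3⟩, h1.1, h1.2⟩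
  -- jets of f and g agree at c within Icc c d
  have hjetgen : ∀ (x₀ : ℝ), x₀ ∈ Icc c d → (x₀ = c ∨ x₀ = d) →
      ∀ n : ℕ, iteratedDerivWithin n f (Icc a b) x₀ = iteratedDerivWithin n g (Icc a b) x₀ := by
    rintro x₀ hx₀ (rfl | rfl) n
    · rcases eq_or_lt_of_le hac with rfl | hlt'
      · exact hA n
      · apply lune_aux_jets_limit hab hf hg (T := Ico a x₀)
          (fun x hx => ⟨hx.1, hx.2.le.trans hcmem.2⟩) hcmem _ n
        · intro x hx
          apply lune_aux_jets_local _ (heqoff x ⟨hx.1, hx.2.le.trans hcmem.2⟩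
            (fun h => absurd hx.2 (not_lt.2 h.1.le))) n
          filter_upwards [self_mem_nhdsWithin,
            mem_nhdsWithin_of_mem_nhds (Iio_mem_nhds hx.2)] with y hy1 hy2
          exact heqoff y hy1 (fun h => absurd hy2 (not_lt.2 h.1.le))
        · rw [← mem_closure_iff_nhdsWithin_neBot, closure_Ico hlt'.ne]
          exact ⟨hlt'.le, le_rfl⟩
    · rcases eq_or_lt_of_le hdb with rfl | hlt'
      · exact hB n
      · apply lune_aux_jets_limit hab hf hg (T := Ioc x₀ b)
          (fun x hx => ⟨hdmem.1.trans hx.1.le, hx.2⟩) hdmem _ n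
        · intro x hx
          apply lune_aux_jets_local _ (heqoff x ⟨hdmem.1.trans hx.1.le, hx.2⟩
            (fun h => absurd hx.1 (not_lt.2 h.2.le))) n
          filter_upwards [self_mem_nhdsWithin,
            mem_nhdsWithin_of_mem_nhds (Ioi_mem_nhds hx.1)] with y hy1 hy2
          exact heqoff y hy1 (fun h => absurd hy2 (not_lt.2 h.2.le))
        · rw [← mem_closure_iff_nhdsWithin_neBot, closure_Ioc hlt'.ne]
          exact ⟨le_rfl, hlt'.le⟩
  have hjets : ∀ (x₀ : ℝ), (x₀ = c ∨ x₀ = d) →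
      ∀ n : ℕ, iteratedDerivWithin n f (Icc c d) x₀ = iteratedDerivWithin n g (Icc c d) x₀ := by
    intro x₀ hx₀ n
    have hmem : x₀ ∈ Icc c d := by
      rcases hx₀ with rfl | rfl
      · exact ⟨le_rfl, hcd.le⟩
      · exact ⟨hcd.le, le_rfl⟩
    rw [lune_aux_subset_jets hab hcd hsub hf hmem n,
      lune_aux_subset_jets hab hcd hsub hg hmem n]
    exact hjetgen x₀ hmem hx₀ n
  -- the support of the restricted lune
  have hsupp' : luneSupport c d f g = Ioo c d := by
    ext x
    constructor
    · rintro ⟨h1, h2⟩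
      have : x ∈ luneSupport a b f g := ⟨hsub h1, h2⟩
      rwa [hsupp] at this
    · intro hx
      exact ⟨⟨hx.1.le, hx.2.le⟩, hlt x hx⟩
  refine ⟨by rw [hEss, hset], hEss,
    ⟨⟨hcd, hf.mono hsub, hg.mono hsub, fun x hx => hfg x (hsub hx),
      fun n => hjets c (Or.inl rfl) n, fun n => hjets d (Or.inr rfl) n⟩,
      c, d, hcd, hsupp'⟩⟩
end

section
/- Let L = L(f,g) be a simple lune with domain [a,b] and support (c,d). Then for any two points p, q ∈ ess L, the squared Euclidean distance satisfies |p − q|² ≤ (d − c)² + (‖g − f‖_0 + M·(d − c))², where ‖g − f‖_0 = sup_{x∈[a,b]} |g(x) − f(x)| and M = sup_{x∈[a,b]} |f′(x)|. In particular, the diameter D of ess L satisfies D² ≤ (d − c)² + (‖g − f‖_0 + M(d − c))². -/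
open Set

/-- The lune `L(f,g)` with domain `[a,b]`, as a subset of the Euclidean plane
`EuclideanSpace ℝ (Fin 2)`: the region `{(x,y) : a ≤ x ≤ b, f(x) ≤ y ≤ g(x)}`. -/
def luneE (a b : ℝ) (f g : ℝ → ℝ) : Set (EuclideanSpace ℝ (Fin 2)) :=
  {p | p 0 ∈ Icc a b ∧ f (p 0) ≤ p 1 ∧ p 1 ≤ g (p 0)}

/-- Let `L = L(f,g)` be a simple lune with domain `[a,b]` and support
`(c,d)`. Then for any two points `p, q ∈ ess L = closure (interior L)`, the squared
Euclidean distance satisfies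
`|p − q|² ≤ (d − c)² + (‖g − f‖₀ + M (d − c))²`,
where `‖g − f‖₀ = sup_{x∈[a,b]} |g(x) − f(x)|` and `M = sup_{x∈[a,b]} |f′(x)|`.
In particular the diameter `D` of `ess L` satisfies
`D² ≤ (d − c)² + (‖g − f‖₀ + M (d − c))²`. -/
theorem sq_dist_le_of_mem_essLune (a b c d : ℝ) (f g : ℝ → ℝ)
    (hL : IsLune a b f g) (hcd : c < d)
    (hsupp : luneSupport a b f g = Ioo c d)
    (N₀ M : ℝ)
    (hN₀ : N₀ = sSup {y : ℝ | ∃ x ∈ Icc a b, y = |g x - f x|})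
    (hM : M = sSup {y : ℝ | ∃ x ∈ Icc a b, y = |derivWithin f (Icc a b) x|}) :
    (∀ p ∈ closure (interior (luneE a b f g)),
      ∀ q ∈ closure (interior (luneE a b f g)),
        dist p q ^ 2 ≤ (d - c) ^ 2 + (N₀ + M * (d - c)) ^ 2) ∧
    Metric.diam (closure (interior (luneE a b f g))) ^ 2 ≤
      (d - c) ^ 2 + (N₀ + M * (d - c)) ^ 2 := by

  classical
  obtain ⟨hab, hf, hg, hfg, -, -⟩ := hL
  have hab' : a ≤ b := hab.le
  have hud : UniqueDiffOn ℝ (Icc a b) := uniqueDiffOn_Icc hab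
  set L := luneE a b f g with hLdef
  set RHS := (d - c) ^ 2 + (N₀ + M * (d - c)) ^ 2 with hRHS
  -- continuity of derivWithin f
  have hf' : ContinuousOn (derivWithin f (Icc a b)) (Icc a b) :=
    hf.continuousOn_derivWithin hud (by simp)
  -- M is an upper bound for |f'| on [a,b]
  have hMset : {y : ℝ | ∃ x ∈ Icc a b, y = |derivWithin f (Icc a b) x|} =
      (fun x => |derivWithin f (Icc a b) x|) '' Icc a b := by
    ext y; constructor
    · rintro ⟨x, hx, rfl⟩; exact ⟨x, hx, rfl⟩
    · rintro ⟨x, hx, rfl⟩; exact ⟨x, hx, rfl⟩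
  have hMbdd : BddAbove {y : ℝ | ∃ x ∈ Icc a b, y = |derivWithin f (Icc a b) x|} := by
    rw [hMset]
    exact (isCompact_Icc.image_of_continuousOn
      (continuous_abs.comp_continuousOn hf')).bddAbove
  have hMle : ∀ x ∈ Icc a b, |derivWithin f (Icc a b) x| ≤ M := fun x hx =>
    hM ▸ le_csSup hMbdd ⟨x, hx, rfl⟩
  -- N₀ is an upper bound for |g - f| on [a,b]
  have hNset : {y : ℝ | ∃ x ∈ Icc a b, y = |g x - f x|} =
      (fun x => |g x - f x|) '' Icc a b := by
    ext y; constructor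
    · rintro ⟨x, hx, rfl⟩; exact ⟨x, hx, rfl⟩
    · rintro ⟨x, hx, rfl⟩; exact ⟨x, hx, rfl⟩
  have hNbdd : BddAbove {y : ℝ | ∃ x ∈ Icc a b, y = |g x - f x|} := by
    rw [hNset]
    exact (isCompact_Icc.image_of_continuousOn
      (continuous_abs.comp_continuousOn
        ((hg.continuousOn).sub (hf.continuousOn)))).bddAbove
  have hNle : ∀ x ∈ Icc a b, |g x - f x| ≤ N₀ := fun x hx =>
    hN₀ ▸ le_csSup hNbdd ⟨x, hx, rfl⟩
  have haab : a ∈ Icc a b := ⟨le_refl a, hab'⟩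
  have hM0 : 0 ≤ M := le_trans (abs_nonneg _) (hMle a haab)
  have hN0 : 0 ≤ N₀ := le_trans (abs_nonneg _) (hNle a haab)
  -- Lipschitz estimate for f on [a,b]
  have hlip : ∀ x ∈ Icc a b, ∀ y ∈ Icc a b, |f x - f y| ≤ M * |x - y| := by
    intro x hx y hy
    have h := (convex_Icc a b).norm_image_sub_le_of_norm_derivWithin_le
      (hf.differentiableOn (by simp))
      (fun z hz => by simpa [Real.norm_eq_abs] using hMle z hz) hy hx
    simpa [Real.norm_eq_abs] using h
  have hsub : Ioo c d ⊆ Icc a b := by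
    rw [← hsupp]; exact fun x hx => hx.1
  -- interior points lie over the support
  have hint : ∀ p ∈ interior L, p 0 ∈ Ioo c d ∧ f (p 0) ≤ p 1 ∧ p 1 ≤ g (p 0) := by
    intro p hp
    have hpL : p ∈ L := interior_subset hp
    obtain ⟨hp0, hp1, hp2⟩ := hpL
    obtain ⟨ε, hε, hball⟩ := Metric.mem_nhds_iff.mp (mem_interior_iff_mem_nhds.mp hp)
    have hhalf : (0:ℝ) < ε / 2 := by linarith
    have hq : p + EuclideanSpace.single 1 (ε / 2) ∈ L := by
      apply hball
      rw [Metric.mem_ball, dist_eq_norm]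
      simp only [add_sub_cancel_left]
      rw [EuclideanSpace.norm_single, Real.norm_eq_abs, abs_of_pos hhalf]
      linarith
    have hq' : p + EuclideanSpace.single 1 (-(ε / 2)) ∈ L := by
      apply hball
      rw [Metric.mem_ball, dist_eq_norm]
      simp only [add_sub_cancel_left]
      rw [EuclideanSpace.norm_single, Real.norm_eq_abs, abs_neg, abs_of_pos hhalf]
      linarith
    have e0 : ∀ t : ℝ, (p + EuclideanSpace.single (1 : Fin 2) t) 0 = p 0 := by
      intro t
      have : (p + EuclideanSpace.single (1 : Fin 2) t) 0
          = p 0 + EuclideanSpace.single (1 : Fin 2) t 0 := rfl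
      rw [this, EuclideanSpace.single_apply]
      norm_num
    have e1 : ∀ t : ℝ, (p + EuclideanSpace.single (1 : Fin 2) t) 1 = p 1 + t := by
      intro t
      have : (p + EuclideanSpace.single (1 : Fin 2) t) 1
          = p 1 + EuclideanSpace.single (1 : Fin 2) t 1 := rfl
      rw [this, EuclideanSpace.single_apply]
      norm_num
    obtain ⟨-, hq1, hq2⟩ := hq
    obtain ⟨-, hq1', hq2'⟩ := hq'
    rw [e0, e1] at hq1 hq2
    rw [e0, e1] at hq1' hq2'
    have hlt : f (p 0) < g (p 0) := by linarith
    have : p 0 ∈ luneSupport a b f g := ⟨hp0, hlt⟩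
    rw [hsupp] at this
    exact ⟨this, hp1, hp2⟩
  -- key estimate on the interior
  have key : ∀ p ∈ interior L, ∀ q ∈ interior L, dist p q ^ 2 ≤ RHS := by
    intro p hp q hq
    obtain ⟨hp0, hpf, hpg⟩ := hint p hp
    obtain ⟨hq0, hqf, hqg⟩ := hint q hq
    have hpab : p 0 ∈ Icc a b := hsub hp0
    have hqab : q 0 ∈ Icc a b := hsub hq0
    have habs0 : |p 0 - q 0| ≤ d - c := by
      rw [abs_le]
      constructor <;> [linarith [hp0.1, hq0.2]; linarith [hp0.2, hq0.1]]
    have hfd : |f (p 0) - f (q 0)| ≤ M * (d - c) :=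
      le_trans (hlip _ hpab _ hqab) (mul_le_mul_of_nonneg_left habs0 hM0)
    have hgp : g (p 0) - f (p 0) ≤ N₀ := le_trans (le_abs_self _) (hNle _ hpab)
    have hgq : g (q 0) - f (q 0) ≤ N₀ := le_trans (le_abs_self _) (hNle _ hqab)
    have habs1 : |p 1 - q 1| ≤ N₀ + M * (d - c) := by
      have h1 := le_abs_self (f (p 0) - f (q 0))
      have h2 := neg_abs_le (f (p 0) - f (q 0))
      rw [abs_le]
      constructor <;> nlinarith
    have hdist : dist p q ^ 2 = |p 0 - q 0| ^ 2 + |p 1 - q 1| ^ 2 := by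
      rw [EuclideanSpace.dist_eq, Real.sq_sqrt (by positivity)]
      simp [Fin.sum_univ_two, Real.dist_eq]
    rw [hdist, hRHS]
    exact add_le_add (pow_le_pow_left₀ (abs_nonneg _) habs0 2)
      (pow_le_pow_left₀ (abs_nonneg _) habs1 2)
  -- pass to the closure
  have key2 : ∀ p ∈ closure (interior L), ∀ q ∈ closure (interior L),
      dist p q ^ 2 ≤ RHS := by
    have step1 : ∀ q ∈ interior L, ∀ p ∈ closure (interior L), dist p q ^ 2 ≤ RHS := by
      intro q hq
      have hcl : IsClosed {r : EuclideanSpace ℝ (Fin 2) | dist r q ^ 2 ≤ RHS} :=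
        isClosed_le (by fun_prop) continuous_const
      have : interior L ⊆ {r | dist r q ^ 2 ≤ RHS} := fun r hr => key r hr q hq
      exact fun p hp => closure_minimal this hcl hp
    intro p hp q hq
    have hcl : IsClosed {r : EuclideanSpace ℝ (Fin 2) | dist p r ^ 2 ≤ RHS} :=
      isClosed_le (by fun_prop) continuous_const
    have : interior L ⊆ {r | dist p r ^ 2 ≤ RHS} := fun r hr => step1 r hr p hp
    exact closure_minimal this hcl hq
  refine ⟨key2, ?_⟩
  have hRHS0 : 0 ≤ RHS := by positivity
  have hdiam : Metric.diam (closure (interior L)) ≤ Real.sqrt RHS := by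
    apply Metric.diam_le_of_forall_dist_le (Real.sqrt_nonneg _)
    intro p hp q hq
    have := key2 p hp q hq
    calc dist p q = Real.sqrt (dist p q ^ 2) := (Real.sqrt_sq dist_nonneg).symm
      _ ≤ Real.sqrt RHS := Real.sqrt_le_sqrt this
  calc Metric.diam (closure (interior L)) ^ 2
      ≤ Real.sqrt RHS ^ 2 := pow_le_pow_left₀ Metric.diam_nonneg hdiam 2
    _ = RHS := Real.sq_sqrt hRHS0
end
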